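/- arXiv:2108.07128 — 7 statements merged into one kernel-verified Lean document; each statement's English description precedes it below -/
import Mathlib

section
/- Let λ, γ > 0 and for each integer k ≥ 0 define S_k(t) = 1 - (λ/(λ+γ))^k + (λ/(λ+γ))^k · e^{-(λ+γ)t} · Σ_{n=0}^{k-1} ((λ+γ)^n t^n / n!). Then S_0(t) = 0 for all t, S_k(0) = 1 for k ≥ 1, and for all k ≥ 1 and t ∈ ℝ the functions satisfy the differential equation S_k'(t) + (λ+γ) S_k(t) = λ S_{k-1}(t) + γ. -/
open Finset

private lemma sum_deriv_aux (c : ℝ) (m : ℕ) (t : ℝ) :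
    HasDerivAt (fun t : ℝ => ∑ n ∈ Finset.range (m + 1), c ^ n * t ^ n / (n.factorial : ℝ))
      (c * ∑ n ∈ Finset.range m, c ^ n * t ^ n / (n.factorial : ℝ)) t := by
  have h : ∀ n ∈ Finset.range (m + 1),
      HasDerivAt (fun t : ℝ => c ^ n * t ^ n / (n.factorial : ℝ))
        (c ^ n * (n * t ^ (n - 1)) / (n.factorial : ℝ)) t := by
    intro n _
    simpa [mul_div_assoc] using
      (((hasDerivAt_pow n t).const_mul (c ^ n)).div_const (n.factorial : ℝ))
  have := HasDerivAt.fun_sum h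
  refine this.congr_deriv ?_
  rw [Finset.sum_range_succ']
  simp only [Nat.factorial_zero, pow_zero, Nat.cast_zero, zero_mul, mul_zero, zero_div, add_zero]
  rw [Finset.mul_sum]
  refine Finset.sum_congr rfl fun n _ => ?_
  have hfac : ((n + 1).factorial : ℝ) = (n + 1) * n.factorial := by
    push_cast [Nat.factorial_succ]; ring
  rw [hfac]
  have h1 : (0:ℝ) < (n:ℝ) + 1 := by positivity
  have h2 : (0:ℝ) < (n.factorial : ℝ) := by positivity
  push_cast [Nat.add_sub_cancel]
  field_simp
  ring

theorem sir_chain_susceptible_closed_form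
    (lam gam : ℝ) (hlam : 0 < lam) (hgam : 0 < gam)
    (S : ℕ → ℝ → ℝ)
    (hS : ∀ k t, S k t =
      1 - (lam / (lam + gam)) ^ k
        + (lam / (lam + gam)) ^ k * Real.exp (-(lam + gam) * t)
            * ∑ n ∈ Finset.range k, (lam + gam) ^ n * t ^ n / (n.factorial : ℝ)) :
    (∀ t : ℝ, S 0 t = 0) ∧
    (∀ k : ℕ, 1 ≤ k → S k 0 = 1) ∧
    (∀ k : ℕ, 1 ≤ k → ∀ t : ℝ,
      deriv (S k) t + (lam + gam) * S k t = lam * S (k - 1) t + gam) := by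
  set c := lam + gam with hc
  have hc0 : c ≠ 0 := by positivity
  set r := lam / c with hr
  refine ⟨fun t => by simp [hS], ?_, ?_⟩
  · intro k hk
    rw [hS]
    have : ∑ n ∈ Finset.range k, c ^ n * (0:ℝ) ^ n / (n.factorial : ℝ) = 1 := by
      rw [Finset.sum_eq_single 0]
      · simp
      · intro n _ hn
        simp [zero_pow hn]
      · intro h; exact absurd (Finset.mem_range.mpr hk) h
    rw [this]
    simp
  · intro k hk t
    obtain ⟨m, rfl⟩ := Nat.exists_eq_add_of_le hk
    have hkm : 1 + m = m + 1 := by omega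
    rw [hkm]
    -- derivative
    have hexp : HasDerivAt (fun t : ℝ => Real.exp (-c * t)) (-c * Real.exp (-c * t)) t := by
      have h := ((hasDerivAt_id t).const_mul (-c)).exp
      simp only [id_eq] at h
      convert h using 1
      ring
    have hsum := sum_deriv_aux c m t
    set P : ℝ := ∑ n ∈ Finset.range (m + 1), c ^ n * t ^ n / (n.factorial : ℝ) with hP
    set Q : ℝ := ∑ n ∈ Finset.range m, c ^ n * t ^ n / (n.factorial : ℝ) with hQ
    have hprod : HasDerivAt (fun t : ℝ => 1 - r ^ (m + 1)
        + r ^ (m + 1) * Real.exp (-c * t)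
            * ∑ n ∈ Finset.range (m + 1), c ^ n * t ^ n / (n.factorial : ℝ))
        (r ^ (m + 1) * ((-c * Real.exp (-c * t)) * P + Real.exp (-c * t) * (c * Q))) t := by
      have := ((hexp.mul hsum).const_mul (r ^ (m + 1))).const_add (1 - r ^ (m + 1))
      simpa [mul_assoc] using this
    have hSd : deriv (S (m + 1)) t
        = r ^ (m + 1) * ((-c * Real.exp (-c * t)) * P + Real.exp (-c * t) * (c * Q)) := by
      have hfun : S (m + 1) = fun t : ℝ => 1 - r ^ (m + 1)
          + r ^ (m + 1) * Real.exp (-c * t)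
              * ∑ n ∈ Finset.range (m + 1), c ^ n * t ^ n / (n.factorial : ℝ) := by
        funext t; rw [hS]
      rw [hfun]
      exact hprod.deriv
    rw [hSd, hS, hS]
    simp only [Nat.add_sub_cancel, ← hP, ← hQ]
    have hrk : lam * r ^ m = c * r ^ (m + 1) := by
      rw [hr, pow_succ]
      field_simp
    have key : lam * (1 - r ^ m + r ^ m * Real.exp (-c * t) * Q) + gam
        = r ^ (m + 1) * ((-c * Real.exp (-c * t)) * P + Real.exp (-c * t) * (c * Q))
          + c * (1 - r ^ (m + 1) + r ^ (m + 1) * Real.exp (-c * t) * P) := by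
      linear_combination (Real.exp (-c * t) * Q - 1) * hrk - hc
    linarith [key]
end

section
/- Let λ, γ > 0 and define, for integer k ≥ 1, I_k(t) = e^{-γ t} - e^{-(λ+γ)t} Σ_{n=0}^{k-1} (λ^n t^n / n!) and S_k(t) = 1 - (λ/(λ+γ))^k + (λ/(λ+γ))^k e^{-(λ+γ)t} Σ_{n=0}^{k-1} ((λ+γ)^n t^n / n!). Then I_k(0) = 0 and I_k'(t) + γ I_k(t) = -S_k'(t) for all t ∈ ℝ. -/
open Finset

lemma sum_hasDerivAt' (a : ℝ) (m : ℕ) (t : ℝ) :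
    HasDerivAt (fun t => ∑ n ∈ Finset.range (m+1), a ^ n * t ^ n / (n.factorial : ℝ))
      (a * ∑ n ∈ Finset.range m, a ^ n * t ^ n / (n.factorial : ℝ)) t := by
  have h : ∀ n ∈ Finset.range (m+1),
      HasDerivAt (fun t : ℝ => a ^ n * t ^ n / (n.factorial : ℝ))
        (a ^ n * ((n:ℝ) * t ^ (n-1)) / (n.factorial : ℝ)) t := fun n _ =>
    ((hasDerivAt_pow n t).const_mul (a ^ n)).div_const _
  have hsum : HasDerivAt (fun y => ∑ i ∈ Finset.range (m+1), a ^ i * y ^ i / (i.factorial : ℝ))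
      (∑ i ∈ Finset.range (m+1), a ^ i * ((i:ℝ) * t ^ (i-1)) / (i.factorial : ℝ)) t :=
    HasDerivAt.fun_sum h
  convert hsum using 1
  rw [Finset.sum_range_succ']
  simp only [pow_zero, Nat.cast_zero, zero_mul, mul_zero, zero_div, add_zero,
    Nat.add_sub_cancel, Finset.mul_sum]
  refine Finset.sum_congr rfl fun n _ => ?_
  have hfac : ((n+1).factorial : ℝ) = (n+1 : ℝ) * (n.factorial : ℝ) := by
    rw [Nat.factorial_succ]; push_cast; ring
  rw [hfac]
  have h1 : ((n:ℝ)+1) ≠ 0 := by positivity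
  field_simp
  push_cast
  ring

lemma exp_hasDerivAt (c t : ℝ) :
    HasDerivAt (fun t => Real.exp (c * t)) (c * Real.exp (c * t)) t := by
  have := (Real.hasDerivAt_exp (c * t)).comp t ((hasDerivAt_id t).const_mul c)
  simpa [mul_comm, Function.comp_def] using this

theorem sir_chain_infectious_ode
    (lam gam : ℝ) (hlam : 0 < lam) (hgam : 0 < gam)
    (S I : ℕ → ℝ → ℝ)
    (hI : ∀ k t, I k t =
      Real.exp (-gam * t)
        - Real.exp (-(lam + gam) * t) * ∑ n ∈ Finset.range k, lam ^ n * t ^ n / (n.factorial : ℝ))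
    (hS : ∀ k t, S k t =
      1 - (lam / (lam + gam)) ^ k
        + (lam / (lam + gam)) ^ k * Real.exp (-(lam + gam) * t)
            * ∑ n ∈ Finset.range k, (lam + gam) ^ n * t ^ n / (n.factorial : ℝ)) :
    ∀ k : ℕ, 1 ≤ k →
      I k 0 = 0 ∧ ∀ t : ℝ, deriv (I k) t + gam * I k t = -(deriv (S k) t) := by
  intro k hk
  obtain ⟨m, rfl⟩ : ∃ m, k = m + 1 := ⟨k - 1, by omega⟩
  have hmu : lam + gam ≠ 0 := by positivity
  constructor
  · rw [hI]
    rw [Finset.sum_range_succ']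
    simp
  · intro t
    have hIfun : I (m+1) = fun t => Real.exp (-gam * t)
        - Real.exp (-(lam + gam) * t) * ∑ n ∈ Finset.range (m+1), lam ^ n * t ^ n / (n.factorial : ℝ) :=
      funext (hI (m+1))
    have hSfun : S (m+1) = fun t => 1 - (lam / (lam + gam)) ^ (m+1)
        + (lam / (lam + gam)) ^ (m+1) * Real.exp (-(lam + gam) * t)
            * ∑ n ∈ Finset.range (m+1), (lam + gam) ^ n * t ^ n / (n.factorial : ℝ) :=
      funext (hS (m+1))
    have hP := sum_hasDerivAt' lam m t
    have hQ := sum_hasDerivAt' (lam + gam) m t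
    have hE1 := exp_hasDerivAt (-gam) t
    have hE2 := exp_hasDerivAt (-(lam + gam)) t
    have hIder : HasDerivAt (I (m+1))
        ((-gam) * Real.exp (-gam * t)
          - (((-(lam + gam)) * Real.exp (-(lam + gam) * t))
              * (∑ n ∈ Finset.range (m+1), lam ^ n * t ^ n / (n.factorial : ℝ))
            + Real.exp (-(lam + gam) * t)
              * (lam * ∑ n ∈ Finset.range m, lam ^ n * t ^ n / (n.factorial : ℝ)))) t := by
      rw [hIfun]; exact hE1.sub (hE2.mul hP)
    have hSder : HasDerivAt (S (m+1))
        (((lam / (lam + gam)) ^ (m+1) * ((-(lam + gam)) * Real.exp (-(lam + gam) * t)))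
            * (∑ n ∈ Finset.range (m+1), (lam + gam) ^ n * t ^ n / (n.factorial : ℝ))
          + ((lam / (lam + gam)) ^ (m+1) * Real.exp (-(lam + gam) * t))
            * ((lam + gam) * ∑ n ∈ Finset.range m, (lam + gam) ^ n * t ^ n / (n.factorial : ℝ))) t := by
      rw [hSfun]
      have := ((hE2.const_mul ((lam / (lam + gam)) ^ (m+1))).fun_mul hQ).const_add
        (1 - (lam / (lam + gam)) ^ (m+1))
      convert this using 1
    rw [hIder.deriv, hSder.deriv, hI]
    rw [Finset.sum_range_succ (fun n => lam ^ n * t ^ n / (n.factorial : ℝ)),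
        Finset.sum_range_succ (fun n => (lam + gam) ^ n * t ^ n / (n.factorial : ℝ))]
    have hdiv : (lam / (lam + gam)) ^ (m+1) * (lam + gam) ^ (m+1) = lam ^ (m+1) := by
      rw [div_pow]; field_simp
    have hfac : (m.factorial : ℝ) ≠ 0 := Nat.cast_ne_zero.mpr m.factorial_ne_zero
    set A := ∑ n ∈ Finset.range m, lam ^ n * t ^ n / (n.factorial : ℝ)
    set B := ∑ n ∈ Finset.range m, (lam + gam) ^ n * t ^ n / (n.factorial : ℝ)
    set E := Real.exp (-(lam + gam) * t)
    set E1 := Real.exp (-gam * t)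
    have key : (lam / (lam + gam)) ^ (m+1) * ((lam+gam) * ((lam+gam)^m * t^m / (m.factorial:ℝ)))
        = lam ^ (m+1) * t^m / (m.factorial:ℝ) := by
      rw [show (lam+gam) * ((lam+gam)^m * t^m / (m.factorial:ℝ))
          = (lam+gam)^(m+1) * (t^m / (m.factorial:ℝ)) by ring, ← mul_assoc, hdiv]
      ring
    rw [div_pow]
    field_simp
    ring
end

section
/- Let λ, γ > 0 and for k ≥ 0 define S_k(t) = 1 - (λ/(λ+γ))^k + (λ/(λ+γ))^k e^{-(λ+γ)t} Σ_{n=0}^{k-1} ((λ+γ)^n t^n / n!). Then for every k ≥ 1, S_k is strictly decreasing on [0,∞), S_k(t) ∈ (0,1] for t ≥ 0, and S_k(t) → 1 - (λ/(λ+γ))^k as t → ∞. -/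
open Finset Filter

private lemma telescope_sum (a t : ℝ) (m : ℕ) :
    ∑ n ∈ Finset.range (m + 1), a ^ n * (↑n * t ^ (n - 1)) / (n.factorial : ℝ)
      = a * ∑ n ∈ Finset.range (m + 1), a ^ n * t ^ n / (n.factorial : ℝ)
        - a ^ (m + 1) * t ^ m / (m.factorial : ℝ) := by
  rw [Finset.sum_range_succ' (fun n => a ^ n * (↑n * t ^ (n - 1)) / (n.factorial : ℝ)),
    Finset.sum_range_succ (fun n => a ^ n * t ^ n / (n.factorial : ℝ))]
  have : ∀ n ∈ Finset.range m,
      a ^ (n + 1) * (↑(n + 1) * t ^ (n + 1 - 1)) / ((n + 1).factorial : ℝ)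
        = a * (a ^ n * t ^ n / (n.factorial : ℝ)) := by
    intro n _
    have hf : ((n + 1).factorial : ℝ) = (n + 1) * (n.factorial : ℝ) := by
      rw [Nat.factorial_succ]; push_cast; ring
    have h0 : ((n : ℝ) + 1) ≠ 0 := by positivity
    have h1 : (n.factorial : ℝ) ≠ 0 := by positivity
    rw [hf, Nat.add_sub_cancel]
    push_cast
    field_simp
    ring
  rw [Finset.sum_congr rfl this, ← Finset.mul_sum]
  norm_num
  ring

theorem sir_chain_susceptible_monotone_and_limit
    (lam gam : ℝ) (hlam : 0 < lam) (hgam : 0 < gam)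
    (S : ℕ → ℝ → ℝ)
    (hS : ∀ k t, S k t =
      1 - (lam / (lam + gam)) ^ k
        + (lam / (lam + gam)) ^ k * Real.exp (-(lam + gam) * t)
            * ∑ n ∈ Finset.range k, (lam + gam) ^ n * t ^ n / (n.factorial : ℝ)) :
    ∀ k : ℕ, 1 ≤ k →
      StrictAntiOn (S k) (Set.Ici (0 : ℝ)) ∧
      (∀ t : ℝ, 0 ≤ t → S k t ∈ Set.Ioc (0 : ℝ) 1) ∧
      Tendsto (S k) atTop (nhds (1 - (lam / (lam + gam)) ^ k)) := by
  set a : ℝ := lam + gam with ha_def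
  have ha : 0 < a := by positivity
  set p : ℝ := lam / a with hp_def
  have hp0 : 0 < p := by positivity
  have hp1 : p < 1 := by
    rw [hp_def, div_lt_one ha]
    linarith
  intro k hk
  obtain ⟨m, rfl⟩ : ∃ m, k = m + 1 := ⟨k - 1, (Nat.succ_pred_eq_of_pos hk).symm⟩
  set k := m + 1 with hk_def
  set F : ℝ → ℝ := fun t => ∑ n ∈ Finset.range k, a ^ n * t ^ n / (n.factorial : ℝ) with hF_def
  have hSk : S k = fun t => 1 - p ^ k + p ^ k * Real.exp (-a * t) * F t := funext (hS k)
  have hSk2 : S k = fun t => 1 - p ^ k + p ^ k * (Real.exp (-a * t) * F t) := by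
    rw [hSk]; funext t; ring
  have hpk0 : 0 < p ^ k := pow_pos hp0 k
  have hpk1 : p ^ k < 1 := pow_lt_one₀ hp0.le hp1 (by omega)
  -- derivative
  have hderiv : ∀ t : ℝ, HasDerivAt (S k)
      (-(p ^ k * Real.exp (-a * t) * (a ^ k * t ^ m / (m.factorial : ℝ)))) t := by
    intro t
    have hexp : HasDerivAt (fun t : ℝ => Real.exp (-a * t)) (Real.exp (-a * t) * (-a * 1)) t :=
      ((hasDerivAt_id t).const_mul (-a)).exp
    have hFd : HasDerivAt F
        (∑ n ∈ Finset.range k, a ^ n * (↑n * t ^ (n - 1)) / (n.factorial : ℝ)) t := by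
      apply HasDerivAt.fun_sum
      intro n _
      exact ((hasDerivAt_pow n t).const_mul (a ^ n)).div_const _
    have h := (((hexp.mul hFd).const_mul (p ^ k)).const_add (1 - p ^ k))
    rw [hSk2]
    refine h.congr_deriv ?_
    rw [telescope_sum a t m]
    ring
  have hcont : ContinuousOn (S k) (Set.Ici 0) :=
    fun x _ => (hderiv x).continuousAt.continuousWithinAt
  have hmono : StrictAntiOn (S k) (Set.Ici (0 : ℝ)) := by
    apply strictAntiOn_of_deriv_neg (convex_Ici 0) hcont
    intro x hx
    rw [interior_Ici] at hx
    rw [(hderiv x).deriv]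
    have : 0 < p ^ k * Real.exp (-a * x) * (a ^ k * x ^ m / (m.factorial : ℝ)) := by
      have hx0 : (0 : ℝ) < x := hx
      positivity
    linarith
  refine ⟨hmono, ?_, ?_⟩
  · intro t ht
    have hF1 : 1 ≤ F t := by
      have := Finset.single_le_sum
        (f := fun n => a ^ n * t ^ n / (n.factorial : ℝ))
        (fun n _ => by positivity) (Finset.mem_range.2 (Nat.succ_pos m))
      simpa using this
    have hFexp : F t ≤ Real.exp (a * t) := by
      have h := Real.sum_le_exp_of_nonneg (x := a * t) (by positivity) k
      calc F t = ∑ n ∈ Finset.range k, (a * t) ^ n / (n.factorial : ℝ) := by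
            apply Finset.sum_congr rfl
            intro n _
            rw [mul_pow]
          _ ≤ Real.exp (a * t) := h
    constructor
    · rw [hSk]
      have : 0 < p ^ k * Real.exp (-a * t) * F t := by positivity
      simp only
      nlinarith
    · rw [hSk]
      simp only
      have hle : Real.exp (-a * t) * F t ≤ 1 := by
        have := mul_le_mul_of_nonneg_left hFexp (Real.exp_pos (-a * t)).le
        rwa [← Real.exp_add, neg_mul, neg_add_cancel, Real.exp_zero, ← neg_mul] at this
      nlinarith [Real.exp_pos (-a * t)]
  · rw [hSk]
    have hterm : ∀ n : ℕ, Tendsto (fun t : ℝ => Real.exp (-a * t) * (a ^ n * t ^ n / (n.factorial : ℝ)))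
        atTop (nhds 0) := by
      intro n
      have hbase : Tendsto (fun t : ℝ => (a * t) ^ n * Real.exp (-(a * t))) atTop (nhds 0) :=
        (Real.tendsto_pow_mul_exp_neg_atTop_nhds_zero n).comp
          (Filter.tendsto_atTop_atTop_of_monotone (fun x y hxy => by nlinarith)
            (fun b => ⟨b / a, by rw [mul_div_cancel₀ _ ha.ne']⟩))
      have := hbase.const_mul ((1 : ℝ) / (n.factorial : ℝ))
      rw [mul_zero] at this
      apply this.congr
      intro t
      have hf : (n.factorial : ℝ) ≠ 0 := by positivity
      rw [mul_pow, neg_mul]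
      field_simp
    have hsum : Tendsto (fun t : ℝ => Real.exp (-a * t) * F t) atTop (nhds 0) := by
      have h : Tendsto (fun t : ℝ => ∑ n ∈ Finset.range k,
          Real.exp (-a * t) * (a ^ n * t ^ n / (n.factorial : ℝ))) atTop (nhds 0) := by
        have := tendsto_finset_sum (Finset.range k) (fun n _ => hterm n)
        simpa using this
      apply h.congr
      intro t
      rw [hF_def, Finset.mul_sum]
    have := (hsum.const_mul (p ^ k)).const_add (1 - p ^ k)
    rw [mul_zero, add_zero] at this
    apply this.congr
    intro t
    ring
end

section
/- Let λ, γ > 0 and for k ≥ 1 define S_k(t) as the closed-form SIR chain solution S_k(t) = 1 - (λ/(λ+γ))^k + (λ/(λ+γ))^k e^{-(λ+γ)t} Σ_{n=0}^{k-1} ((λ+γ)^n t^n / n!). Then for all t ≥ 0 and k ≥ 1, S_{k+1}(t) ≥ S_k(t). -/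
open Finset

theorem sir_chain_susceptible_monotone_in_distance
    (lam gam : ℝ) (hlam : 0 < lam) (hgam : 0 < gam)
    (S : ℕ → ℝ → ℝ)
    (hS : ∀ k t, S k t =
      1 - (lam / (lam + gam)) ^ k
        + (lam / (lam + gam)) ^ k * Real.exp (-(lam + gam) * t)
            * ∑ n ∈ Finset.range k, (lam + gam) ^ n * t ^ n / (n.factorial : ℝ)) :
    ∀ k : ℕ, 1 ≤ k → ∀ t : ℝ, 0 ≤ t → S k t ≤ S (k + 1) t := by
  intro k _ t ht
  rw [hS, hS]
  have hμ : 0 < lam + gam := by linarith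
  set p : ℝ := lam / (lam + gam) with hp
  have hp0 : 0 ≤ p := div_nonneg hlam.le hμ.le
  have hp1 : p ≤ 1 := by
    rw [hp, div_le_one hμ]; linarith
  set E : ℝ := Real.exp (-(lam + gam) * t) with hE
  have hE0 : 0 < E := Real.exp_pos _
  have hsum : ∀ m : ℕ, ∑ n ∈ Finset.range m, (lam + gam) ^ n * t ^ n / (n.factorial : ℝ)
      = ∑ n ∈ Finset.range m, ((lam + gam) * t) ^ n / (n.factorial : ℝ) := by
    intro m
    refine Finset.sum_congr rfl fun n _ => ?_
    rw [mul_pow]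
  set T : ℕ → ℝ := fun m => ∑ n ∈ Finset.range m, ((lam + gam) * t) ^ n / (n.factorial : ℝ)
    with hT
  rw [hsum, hsum]
  have hμt : 0 ≤ (lam + gam) * t := mul_nonneg hμ.le ht
  have hTexp : ∀ m, T m ≤ Real.exp ((lam + gam) * t) := fun m =>
    Real.sum_le_exp_of_nonneg hμt m
  have hA : ∀ m, E * T m ≤ 1 := by
    intro m
    have := mul_le_mul_of_nonneg_left (hTexp m) hE0.le
    calc E * T m ≤ E * Real.exp ((lam + gam) * t) := this
      _ = 1 := by rw [hE, ← Real.exp_add]; ring_nf; exact Real.exp_zero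
  have hT0 : ∀ m, 0 ≤ T m := by
    intro m
    apply Finset.sum_nonneg
    intro n _
    positivity
  have hTmono : T k ≤ T (k + 1) := by
    rw [hT]
    simp only [Finset.sum_range_succ]
    have : 0 ≤ ((lam + gam) * t) ^ k / (k.factorial : ℝ) := by positivity
    linarith
  -- key: p^(k+1) * (1 - E * T (k+1)) ≤ p^k * (1 - E * T k)
  have h1 : p ^ (k + 1) * (1 - E * T (k + 1)) ≤ p ^ k * (1 - E * T (k + 1)) := by
    apply mul_le_mul_of_nonneg_right (pow_le_pow_of_le_one hp0 hp1 (Nat.le_succ k))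
    linarith [hA (k + 1)]
  have h2 : p ^ k * (1 - E * T (k + 1)) ≤ p ^ k * (1 - E * T k) := by
    apply mul_le_mul_of_nonneg_left _ (pow_nonneg hp0 k)
    have := mul_le_mul_of_nonneg_left hTmono hE0.le
    linarith
  nlinarith [h1, h2]
end

section
/- Let λ, γ > 0 with constant node parameters, and consider the exact rooted-tree SIR system on a chain: S_0' = 0 with S_0(0) = 0; for k ≥ 1, S_k' = -(λ+γ)S_k + λ S_{k-1} + γ with S_k(0) = 1. Then the unique solution is S_k(t) = 1 - (λ/(λ+γ))^k + (λ/(λ+γ))^k e^{-(λ+γ)t} Σ_{n=0}^{k-1} ((λ+γ)^n t^n / n!), and this is proved by induction on k using uniqueness of solutions of scalar linear first-order ODEs. -/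
open Finset

private lemma ode_zero (c : ℝ) (g : ℝ → ℝ)
    (hg : ∀ t, HasDerivAt g (c * g t) t) (h0 : g 0 = 0) (t : ℝ) : g t = 0 := by
  have hd : ∀ s : ℝ, HasDerivAt (fun x => g x * Real.exp (-c * x)) 0 s := by
    intro s
    have he : HasDerivAt (fun x : ℝ => Real.exp (-c * x)) (Real.exp (-c * s) * (-c * 1)) s :=
      ((hasDerivAt_id s).const_mul (-c)).exp
    have := (hg s).fun_mul he
    exact this.congr_deriv (by ring)
  have hconst : ∀ x y : ℝ, g x * Real.exp (-c * x) = g y * Real.exp (-c * y) :=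
    is_const_of_deriv_eq_zero (fun s => (hd s).differentiableAt) (fun s => (hd s).deriv)
  have h1 := hconst t 0
  rw [h0, zero_mul] at h1
  exact (mul_eq_zero.mp h1).resolve_right (Real.exp_ne_zero _)

theorem sir_chain_ode_unique_solution
    (lam gam : ℝ) (hlam : 0 < lam) (hgam : 0 < gam)
    (S : ℕ → ℝ → ℝ)
    (hS0' : ∀ t : ℝ, HasDerivAt (S 0) 0 t)
    (hS00 : S 0 0 = 0)
    (hSk' : ∀ k : ℕ, 1 ≤ k → ∀ t : ℝ,
      HasDerivAt (S k) (-(lam + gam) * S k t + lam * S (k - 1) t + gam) t)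
    (hSk0 : ∀ k : ℕ, 1 ≤ k → S k 0 = 1) :
    ∀ (k : ℕ) (t : ℝ), S k t =
      1 - (lam / (lam + gam)) ^ k
        + (lam / (lam + gam)) ^ k * Real.exp (-(lam + gam) * t)
            * ∑ n ∈ Finset.range k, (lam + gam) ^ n * t ^ n / (n.factorial : ℝ) := by
  set μ := lam + gam with hmu
  have hμ : 0 < μ := by positivity
  have hμ' : μ ≠ 0 := ne_of_gt hμ
  set r := lam / μ with hr
  -- closed form
  set f : ℕ → ℝ → ℝ := fun k t =>
    1 - r ^ k + r ^ k * Real.exp (-μ * t)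
      * ∑ n ∈ Finset.range k, μ ^ n * t ^ n / (n.factorial : ℝ) with hf
  intro k
  induction k with
  | zero =>
    intro t
    have h0 : ∀ s : ℝ, S 0 s = 0 := by
      intro s
      refine ode_zero 0 (S 0) (fun u => ?_) hS00 s
      simpa using hS0' u
    simp [h0 t]
  | succ k ih =>
    -- derivative of the polynomial part
    have hP : ∀ t : ℝ, HasDerivAt
        (fun t => ∑ n ∈ Finset.range (k+1), μ ^ n * t ^ n / (n.factorial : ℝ))
        (μ * ∑ n ∈ Finset.range k, μ ^ n * t ^ n / (n.factorial : ℝ)) t := by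
      intro t
      have h1 : HasDerivAt
          (fun t => ∑ n ∈ Finset.range (k+1), μ ^ n * t ^ n / (n.factorial : ℝ))
          (∑ n ∈ Finset.range (k+1), μ ^ n * (↑n * t ^ (n-1)) / (n.factorial : ℝ)) t := by
        apply HasDerivAt.fun_sum
        intro n _
        exact ((hasDerivAt_pow n t).const_mul (μ ^ n)).div_const _
      convert h1 using 1
      rw [Finset.sum_range_succ']
      simp only [Nat.factorial_succ, pow_succ, Nat.cast_mul, Nat.cast_succ,
        Finset.mul_sum, Nat.add_sub_cancel]
      rw [CharP.cast_eq_zero]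
      simp only [zero_mul, mul_zero, zero_div, add_zero]
      apply Finset.sum_congr rfl
      intro i _
      have hfac : (i.factorial : ℝ) ≠ 0 := Nat.cast_ne_zero.mpr i.factorial_ne_zero
      have hi1 : (i : ℝ) + 1 ≠ 0 := by positivity
      field_simp
    -- derivative of f (k+1)
    have hfd : ∀ t : ℝ, HasDerivAt (f (k+1))
        (-μ * f (k+1) t + lam * f k t + gam) t := by
      intro t
      have he : HasDerivAt (fun x : ℝ => Real.exp (-μ * x)) (Real.exp (-μ * t) * (-μ * 1)) t :=
        ((hasDerivAt_id t).const_mul (-μ)).exp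
      have h2 := (he.mul (hP t)).const_mul (r ^ (k+1))
      have h3 := ((hasDerivAt_const t (1 - r ^ (k+1))).add h2)
      have h4 : HasDerivAt (f (k+1))
          (0 + r ^ (k+1) * (Real.exp (-μ * t) * (-μ * 1)
            * (∑ n ∈ Finset.range (k+1), μ ^ n * t ^ n / (n.factorial : ℝ))
            + Real.exp (-μ * t)
            * (μ * ∑ n ∈ Finset.range k, μ ^ n * t ^ n / (n.factorial : ℝ)))) t := by
        have hfun : f (k+1) = fun x => 1 - r ^ (k+1)
            + r ^ (k+1) * (Real.exp (-μ * x)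
              * ∑ n ∈ Finset.range (k+1), μ ^ n * x ^ n / (n.factorial : ℝ)) := by
          funext x
          simp only [hf]
          ring
        rw [hfun]
        exact h3
      convert h4 using 1
      simp only [hf]
      have key : lam * r ^ k = μ * r ^ (k+1) := by
        rw [hr, pow_succ]
        field_simp
      have hsum : (∑ n ∈ Finset.range (k+1), μ ^ n * t ^ n / (n.factorial : ℝ))
          = (∑ n ∈ Finset.range k, μ ^ n * t ^ n / (n.factorial : ℝ))
            + μ ^ k * t ^ k / (k.factorial : ℝ) := Finset.sum_range_succ _ _
      rw [hsum]
      have hμg : gam = μ - lam := by rw [hmu]; ring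
      rw [hμg]
      linear_combination (Real.exp (-μ * t)
        * (∑ n ∈ Finset.range k, μ ^ n * t ^ n / (n.factorial : ℝ)) - 1) * key
    -- uniqueness: g = S (k+1) - f (k+1)
    have hIH : ∀ t : ℝ, S k t = f k t := ih
    have hg : ∀ t : ℝ, HasDerivAt (fun t => S (k+1) t - f (k+1) t)
        (-μ * (S (k+1) t - f (k+1) t)) t := by
      intro t
      have hS := hSk' (k+1) (Nat.le_add_left 1 k) t
      simp only [Nat.add_sub_cancel] at hS
      rw [hIH t] at hS
      have := hS.fun_sub (hfd t)
      exact this.congr_deriv (by ring)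
    have hg0 : S (k+1) 0 - f (k+1) 0 = 0 := by
      rw [hSk0 (k+1) (Nat.le_add_left 1 k)]
      simp [hf, Finset.sum_range_succ']
    intro t
    have := ode_zero (-μ) _ hg hg0 t
    have heq : S (k+1) t = f (k+1) t := by linarith
    simpa [hf] using heq
end

section
/- Let λ, γ > 0 and for k ≥ 1 define the pair probability P_k(t) = ((λ+γ)/λ) S_k(t) - S_{k-1}(t) - γ/λ, where S_k is the closed-form chain solution S_k(t) = 1 - (λ/(λ+γ))^k + (λ/(λ+γ))^k e^{-(λ+γ)t} Σ_{n=0}^{k-1} ((λ+γ)^n t^n/n!). Then P_k(t) ≥ 0 for all t ≥ 0 and P_k(0) equals 1 if k = 1 and 0 if k ≥ 2. -/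
open Finset

theorem sir_chain_pair_probability_nonneg
    (lam gam : ℝ) (hlam : 0 < lam) (hgam : 0 < gam)
    (S : ℕ → ℝ → ℝ)
    (hS : ∀ k t, S k t =
      1 - (lam / (lam + gam)) ^ k
        + (lam / (lam + gam)) ^ k * Real.exp (-(lam + gam) * t)
            * ∑ n ∈ Finset.range k, (lam + gam) ^ n * t ^ n / (n.factorial : ℝ))
    (P : ℕ → ℝ → ℝ)
    (hP : ∀ k t, P k t = (lam + gam) / lam * S k t - S (k - 1) t - gam / lam) :
    (∀ k : ℕ, 1 ≤ k → ∀ t : ℝ, 0 ≤ t → 0 ≤ P k t) ∧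
    P 1 0 = 1 ∧
    (∀ k : ℕ, 2 ≤ k → P k 0 = 0) := by
  have hμ : (0:ℝ) < lam + gam := by linarith
  have key : ∀ (m : ℕ) (t : ℝ), P (m+1) t
      = lam ^ m * t ^ m / (m.factorial : ℝ) * Real.exp (-(lam+gam)*t) := by
    intro m t
    rw [hP, hS, hS]
    simp only [Nat.add_sub_cancel, Finset.sum_range_succ, pow_succ]
    have hf : ((m.factorial : ℝ)) ≠ 0 := Nat.cast_ne_zero.mpr m.factorial_ne_zero
    field_simp
    have h1 : (lam + gam)⁻¹ ^ m * (lam + gam) ^ m = 1 := by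
      rw [← mul_pow, inv_mul_cancel₀ hμ.ne', one_pow]
    generalize Real.exp (-((lam + gam) * t)) = E
    linear_combination (lam * E * t ^ m * lam ^ m) * h1
  refine ⟨?_, ?_, ?_⟩
  · intro k hk t ht
    obtain ⟨m, rfl⟩ := Nat.exists_eq_add_of_le hk
    rw [add_comm, key]
    positivity
  · rw [show (1:ℕ) = 0 + 1 from rfl, key]; simp
  · intro k hk
    obtain ⟨m, rfl⟩ := Nat.exists_eq_add_of_le hk
    rw [show 2 + m = (m+1) + 1 by ring, key]
    simp
end

section
/- Let A be an n×n real matrix with A_{uv} ≤ 0 for u ≠ v and column sums Σ_u A_{uv} = μ_v + ν_v > 0 with μ_v, ν_v ≥ 0. Then every entry of the vectors A^{-T}μ and A^{-T}ν lies in the interval [0,1], and A^{-T}μ + A^{-T}ν = e (the all-ones vector). -/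
open Finset Matrix

lemma seir_aux_nonneg {n : ℕ} (M : Matrix (Fin n) (Fin n) ℝ)
    (hoff : ∀ i j : Fin n, i ≠ j → M i j ≤ 0)
    (hrow : ∀ i, 0 < ∑ j, M i j)
    (x : Fin n → ℝ) (hx : ∀ v, 0 ≤ M.mulVec x v) : ∀ v, 0 ≤ x v := by
  intro v
  by_contra hneg
  push_neg at hneg
  have hne : (Finset.univ : Finset (Fin n)).Nonempty := ⟨v, Finset.mem_univ v⟩
  obtain ⟨v₀, -, hmin⟩ := Finset.exists_min_image Finset.univ x hne
  have hv₀ : x v₀ < 0 := lt_of_le_of_lt (hmin v (Finset.mem_univ v)) hneg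
  have h1 : M.mulVec x v₀ ≤ (∑ j, M v₀ j) * x v₀ := by
    rw [Matrix.mulVec, dotProduct, Finset.sum_mul]
    refine Finset.sum_le_sum fun j _ => ?_
    by_cases h : v₀ = j
    · subst h; exact le_refl _
    · exact mul_le_mul_of_nonpos_left (hmin j (Finset.mem_univ j)) (hoff v₀ j h)
  have h2 : (∑ j, M v₀ j) * x v₀ < 0 := mul_neg_of_pos_of_neg (hrow v₀) hv₀
  exact absurd (hx v₀) (not_le.mpr (lt_of_le_of_lt h1 h2))

theorem seir_matrix_inverse_transpose_bounds
    (n : ℕ) (A : Matrix (Fin n) (Fin n) ℝ) (mu nu : Fin n → ℝ)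
    (hoff : ∀ u v : Fin n, u ≠ v → A u v ≤ 0)
    (hmu : ∀ v, 0 ≤ mu v) (hnu : ∀ v, 0 ≤ nu v)
    (hcol : ∀ v : Fin n, ∑ u, A u v = mu v + nu v)
    (hpos : ∀ v : Fin n, 0 < mu v + nu v) :
    (∀ v : Fin n, (Aᵀ)⁻¹.mulVec mu v ∈ Set.Icc (0 : ℝ) 1) ∧
    (∀ v : Fin n, (Aᵀ)⁻¹.mulVec nu v ∈ Set.Icc (0 : ℝ) 1) ∧
    (Aᵀ)⁻¹.mulVec mu + (Aᵀ)⁻¹.mulVec nu = (fun _ => (1 : ℝ)) := by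
  set M := Aᵀ with hM
  have hMoff : ∀ i j : Fin n, i ≠ j → M i j ≤ 0 := fun i j h =>
    hoff j i (Ne.symm h)
  have hrow : ∀ i, ∑ j, M i j = mu i + nu i := fun i => by
    simp only [hM, Matrix.transpose_apply]; exact hcol i
  have hrowpos : ∀ i, 0 < ∑ j, M i j := fun i => (hrow i) ▸ hpos i
  -- strict diagonal dominance
  have hdiag : ∀ k, M k k = (mu k + nu k) + ∑ j ∈ Finset.univ.erase k, (-M k j) := by
    intro k
    have := hrow k
    rw [← Finset.add_sum_erase _ _ (Finset.mem_univ k)] at this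
    have : M k k = (mu k + nu k) - ∑ j ∈ Finset.univ.erase k, M k j := by linarith
    rw [this, Finset.sum_neg_distrib]
    ring
  have hdet : M.det ≠ 0 := by
    apply det_ne_zero_of_sum_row_lt_diag
    intro k
    have habs : ∀ j ∈ Finset.univ.erase k, ‖M k j‖ = -M k j := by
      intro j hj
      rw [Real.norm_eq_abs, abs_of_nonpos (hMoff k j (Finset.ne_of_mem_erase hj).symm)]
    rw [Finset.sum_congr rfl habs]
    have hkk : 0 < M k k := by
      rw [hdiag k]
      have : 0 ≤ ∑ j ∈ Finset.univ.erase k, (-M k j) :=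
        Finset.sum_nonneg fun j hj => neg_nonneg.mpr (hMoff k j (Finset.ne_of_mem_erase hj).symm)
      linarith [hpos k]
    rw [Real.norm_eq_abs, abs_of_pos hkk, hdiag k]
    linarith [hpos k]
  have hunit : IsUnit M.det := isUnit_iff_ne_zero.mpr hdet
  have hMM : M * M⁻¹ = 1 := Matrix.mul_nonsing_inv M hunit
  have hMM' : M⁻¹ * M = 1 := Matrix.nonsing_inv_mul M hunit
  set x := M⁻¹.mulVec mu with hx
  set y := M⁻¹.mulVec nu with hy
  have hMx : M.mulVec x = mu := by
    rw [hx, Matrix.mulVec_mulVec, hMM, Matrix.one_mulVec]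
  have hMy : M.mulVec y = nu := by
    rw [hy, Matrix.mulVec_mulVec, hMM, Matrix.one_mulVec]
  have hx0 : ∀ v, 0 ≤ x v :=
    seir_aux_nonneg M hMoff hrowpos x (fun v => by rw [hMx]; exact hmu v)
  have hy0 : ∀ v, 0 ≤ y v :=
    seir_aux_nonneg M hMoff hrowpos y (fun v => by rw [hMy]; exact hnu v)
  have hMe : M.mulVec (fun _ => (1 : ℝ)) = fun v => mu v + nu v := by
    funext v
    simp [Matrix.mulVec, dotProduct, hrow v]
  have hsum : x + y = fun _ => (1 : ℝ) := by
    have h1 : M.mulVec (x + y) = M.mulVec (fun _ => (1 : ℝ)) := by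
      rw [Matrix.mulVec_add, hMx, hMy, hMe]; rfl
    have h2 := congrArg M⁻¹.mulVec h1
    rwa [Matrix.mulVec_mulVec, Matrix.mulVec_mulVec, hMM', Matrix.one_mulVec,
      Matrix.one_mulVec] at h2
  refine ⟨fun v => ⟨hx0 v, ?_⟩, fun v => ⟨hy0 v, ?_⟩, hsum⟩
  · have := congrFun hsum v; simp only [Pi.add_apply] at this; linarith [hy0 v]
  · have := congrFun hsum v; simp only [Pi.add_apply] at this; linarith [hx0 v]
end
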